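/- arXiv:1303.0372 — 6 statements merged into one kernel-verified Lean document; each statement's English description precedes it below -/
import Mathlib

section
/- Let f : A → M be a Jordan generalized derivation with associated linear map d, i.e., f(x∘y) = f(x)∘y + x∘d(y) for all x, y ∈ A, where M is 2-torsion free. Then [[x,y], f(1)] = 0 for all x, y ∈ A, where [a, m] = am − ma denotes the commutator of an algebra element with a bimodule element. -/
open MulOpposite

/-!
Putting `x = 1` in the defining identity gives `2 f(z) = z ∘ f(1) + 2 d(z)`.
Since `x ∘ y = y ∘ x`, also `f(x) ∘ y + x ∘ d(y) = f(y) ∘ x + y ∘ d(x)`; doubling this and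
substituting for `2 f(x)` and `2 f(y)`, the `d`-terms cancel and leave
`y ∘ (x ∘ f(1)) = x ∘ (y ∘ f(1))`. Expanding both sides, this is exactly `[[x, y], f(1)] = 0`.
-/

section JordanSMul

variable {A M : Type*} [Ring A] [AddCommGroup M] [Module A M] [Module Aᵐᵒᵖ M]

/-- The Jordan product `a ∘ m = a m + m a`, the right action `m a` being `op a • m`. -/
def jordanSMul (a : A) (m : M) : M := a • m + op a • m

theorem jordanSMul_add (a : A) (m n : M) :
    jordanSMul a (m + n) = jordanSMul a m + jordanSMul a n := by
  simp only [jordanSMul, smul_add]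
  abel

theorem jordanSMul_one (m : M) : jordanSMul (1 : A) m = m + m := by
  simp only [jordanSMul, one_smul, op_one]

theorem jordanSMul_jordanSMul_sub_jordanSMul_jordanSMul [SMulCommClass A Aᵐᵒᵖ M]
    (x y : A) (m : M) :
    jordanSMul x (jordanSMul y m) - jordanSMul y (jordanSMul x m) =
      (x * y - y * x) • m - op (x * y - y * x) • m := by
  simp only [jordanSMul, smul_add, sub_smul, op_sub, op_mul, mul_smul, smul_comm x (op y) m,
    smul_comm y (op x) m]
  abel

def IsJordanGenDeriv (f d : A → M) : Prop :=
  ∀ x y : A, f (x * y + y * x) = jordanSMul y (f x) + jordanSMul x (d y)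

end JordanSMul

section JordanGeneralizedDerivation

variable {A M F : Type*} [Ring A] [AddCommGroup M] [Module A M] [Module Aᵐᵒᵖ M]
  [FunLike F A M] [AddHomClass F A M] {f : F} {d : A → M}

theorem IsJordanGenDeriv.add_self_eq
    (h : IsJordanGenDeriv f d) (z : A) :
    f z + f z = jordanSMul z (f 1) + (d z + d z) := by
  simpa only [one_mul, mul_one, map_add, jordanSMul_one] using h 1 z

theorem IsJordanGenDeriv.jordanSMul_comm
    (h : IsJordanGenDeriv f d) (x y : A) :
    jordanSMul y (jordanSMul x (f 1)) = jordanSMul x (jordanSMul y (f 1)) := by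
  have hsymm :
      jordanSMul y (f x) + jordanSMul x (d y) = jordanSMul x (f y) + jordanSMul y (d x) := by
    rw [← h, ← h, add_comm]
  set e := jordanSMul y (d x + d x) + jordanSMul x (d y + d y)
  refine add_right_cancel (b := e) ?_
  calc jordanSMul y (jordanSMul x (f 1)) + e
      = jordanSMul y (f x + f x) + jordanSMul x (d y + d y) := by
        rw [h.add_self_eq, jordanSMul_add y, add_assoc]
    _ = (jordanSMul y (f x) + jordanSMul x (d y)) + (jordanSMul y (f x) + jordanSMul x (d y)) := by
        simp only [jordanSMul_add]; abel
    _ = (jordanSMul x (f y) + jordanSMul y (d x)) + (jordanSMul x (f y) + jordanSMul y (d x)) := by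
        rw [hsymm]
    _ = jordanSMul x (f y + f y) + jordanSMul y (d x + d x) := by
        simp only [jordanSMul_add]; abel
    _ = jordanSMul x (jordanSMul y (f 1)) + e := by
        rw [h.add_self_eq, jordanSMul_add x, add_assoc, add_comm (jordanSMul x (d y + d y))]

end JordanGeneralizedDerivation

theorem jordan_generalized_derivation_commutator_general
    {R A M : Type*} [CommRing R] [Ring A] [Algebra R A]
    [AddCommGroup M] [Module R M] [Module A M] [Module Aᵐᵒᵖ M]
    [SMulCommClass A Aᵐᵒᵖ M]
    (f d : A →ₗ[R] M)
    (h : ∀ x y : A, f (x * y + y * x) =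
      op y • f x + y • f x + x • d y + op x • d y) :
    ∀ x y : A, (x * y - y * x) • f 1 - op (x * y - y * x) • f 1 = 0 := by
  have hJ : IsJordanGenDeriv f d := by
    intro x y
    rw [h, jordanSMul, jordanSMul]
    abel
  intro x y
  rw [← jordanSMul_jordanSMul_sub_jordanSMul_jordanSMul, hJ.jordanSMul_comm, sub_self]

/-- If `f : A → M` is a Jordan generalized derivation with associated linear map
`d` and `M` is 2-torsion free, then `[[x,y], f 1] = 0` for all `x, y ∈ A`. -/
theorem jordan_generalized_derivation_commutator
    {R A M : Type*} [CommRing R] [Ring A] [Algebra R A]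
    [AddCommGroup M] [Module R M] [Module A M] [Module Aᵐᵒᵖ M]
    [SMulCommClass A Aᵐᵒᵖ M]
    (htf : ∀ m : M, m + m = 0 → m = 0)
    (f d : A →ₗ[R] M)
    (h : ∀ x y : A, f (x * y + y * x) =
      op y • f x + y • f x + x • d y + op x • d y) :
    ∀ x y : A, (x * y - y * x) • f 1 - op (x * y - y * x) • f 1 = 0 :=
  jordan_generalized_derivation_commutator_general f d h
end

section
/- Let f : A → M be a Jordan generalized derivation with associated linear map d, where M is 2-torsion free. Then for every idempotent e ∈ A, f(1) = e f(1) e + (1−e) f(1) (1−e). -/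
/-!
Write `m a` for the right action `op a • m`, so `e m e` is `e • op e • m`. Putting `x = y = 1`
gives `d 1 = 0`, and sandwiching the identity for `x = y = e` between two copies of `e` gives
`e (d e) e = 0` for every idempotent `e`; applied to `1 - e` this makes `d e = e (d e) + (d e) e`
off-diagonal. Feeding this back into the identities for `(e, e)` and `(1, e)` yields
`e (f 1) + (f 1) e = 2 e (f 1) e`, which is exactly the vanishing of the off-diagonal Peirce
components `e (f 1) (1 - e)` and `(1 - e) (f 1) e`.
-/

open MulOpposite

theorem eq_of_add_self_eq_add_self {M : Type*} [AddCommGroup M]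
    (htf : ∀ m : M, m + m = 0 → m = 0) {a b : M} (hab : a + a = b + b) : a = b :=
  sub_eq_zero.mp <| htf _ <| by rw [sub_add_sub_comm, hab, sub_self]

namespace IsIdempotentElem

section Monoid

variable {A M : Type*} [Monoid A] {e : A}

theorem smul_smul_self [MulAction A M] (he : IsIdempotentElem e) (m : M) : e • e • m = e • m := by
  rw [smul_smul, he.eq]

theorem op_smul_op_smul_self [MulAction Aᵐᵒᵖ M] (he : IsIdempotentElem e) (m : M) :
    op e • op e • m = op e • m := by
  rw [smul_smul, ← op_mul, he.eq]

theorem smul_op_smul_smul [MulAction A M] [MulAction Aᵐᵒᵖ M] [SMulCommClass A Aᵐᵒᵖ M]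
    (he : IsIdempotentElem e) (m : M) : e • op e • e • m = e • op e • m := by
  rw [smul_comm e (op e) (e • m), he.smul_smul_self, ← smul_comm e (op e) m]

end Monoid

theorem eq_smul_op_smul_add_one_sub_smul_op_smul {A M : Type*} [Ring A] [AddCommGroup M]
    [Module A M] [Module Aᵐᵒᵖ M] {e : A} {m : M}
    (hm : e • m + op e • m = e • op e • m + e • op e • m) :
    m = e • op e • m + (1 - e) • op (1 - e) • m := by
  simp only [op_sub, op_one, sub_smul, one_smul, smul_sub]
  linear_combination (norm := abel) hm

end IsIdempotentElem

section JordanGeneralizedDerivation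

variable {A M : Type*} [Ring A] [AddCommGroup M] [Module A M] [Module Aᵐᵒᵖ M]

def IsJordanGeneralizedDerivation (f d : A →+ M) : Prop :=
  ∀ x y : A, f (x * y + y * x) = op y • f x + y • f x + x • d y + op x • d y

namespace IsJordanGeneralizedDerivation

variable {f d : A →+ M} {e : A}

theorem map_add_self_of_isIdempotentElem (hf : IsJordanGeneralizedDerivation f d)
    (he : IsIdempotentElem e) :
    f e + f e = op e • f e + e • f e + e • d e + op e • d e := by
  rw [← map_add, ← hf, he.eq]

theorem map_add_self (hf : IsJordanGeneralizedDerivation f d) (x : A) :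
    f x + f x = op x • f 1 + x • f 1 + d x + d x := by
  simpa only [one_mul, mul_one, map_add, op_one, one_smul] using hf 1 x

theorem associated_map_one (htf : ∀ m : M, m + m = 0 → m = 0)
    (hf : IsJordanGeneralizedDerivation f d) : d 1 = 0 := by
  have H := hf.map_add_self 1
  rw [op_one, one_smul, one_smul] at H
  exact htf _ <| by linear_combination (norm := abel) H.symm

variable [SMulCommClass A Aᵐᵒᵖ M]

theorem smul_op_smul_associated_of_isIdempotentElem (htf : ∀ m : M, m + m = 0 → m = 0)
    (hf : IsJordanGeneralizedDerivation f d) (he : IsIdempotentElem e) :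
    e • op e • d e = 0 := by
  have H := congrArg (e • op e • ·) (hf.map_add_self_of_isIdempotentElem he)
  simp only [smul_add, he.smul_op_smul_smul, he.op_smul_op_smul_self] at H
  exact htf _ <| by linear_combination (norm := abel) H.symm

theorem associated_of_isIdempotentElem (htf : ∀ m : M, m + m = 0 → m = 0)
    (hf : IsJordanGeneralizedDerivation f d) (he : IsIdempotentElem e) :
    d e = e • d e + op e • d e := by
  have hcorner := hf.smul_op_smul_associated_of_isIdempotentElem htf he
  have hcorner' := hf.smul_op_smul_associated_of_isIdempotentElem htf he.one_sub
  rw [map_sub, hf.associated_map_one htf, zero_sub, smul_neg, smul_neg, neg_eq_zero] at hcorner'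
  simp only [op_sub, op_one, sub_smul, one_smul, smul_sub] at hcorner'
  linear_combination (norm := abel) hcorner' - hcorner

theorem map_of_isIdempotentElem (htf : ∀ m : M, m + m = 0 → m = 0)
    (hf : IsJordanGeneralizedDerivation f d) (he : IsIdempotentElem e) :
    f e = e • op e • f e + d e := by
  have hee := hf.map_add_self_of_isIdempotentElem he
  have hcorner := hf.smul_op_smul_associated_of_isIdempotentElem htf he
  have hleft := congrArg (e • ·) hee
  have hright := congrArg (op e • ·) hee
  simp only [smul_add, he.smul_smul_self, he.op_smul_op_smul_self] at hleft hright
  rw [hcorner] at hleft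
  rw [← smul_comm e (op e) (f e), ← smul_comm e (op e) (d e), hcorner] at hright
  refine eq_of_add_self_eq_add_self htf ?_
  linear_combination (norm := abel)
    hee + hleft + hright - 2 • hf.associated_of_isIdempotentElem htf he

theorem smul_op_smul_map_of_isIdempotentElem (htf : ∀ m : M, m + m = 0 → m = 0)
    (hf : IsJordanGeneralizedDerivation f d) (he : IsIdempotentElem e) :
    e • op e • f e = e • op e • f 1 := by
  have H := congrArg (e • op e • ·) (hf.map_add_self e)
  simp only [smul_add, he.smul_op_smul_smul, he.op_smul_op_smul_self,
    hf.smul_op_smul_associated_of_isIdempotentElem htf he] at H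
  exact eq_of_add_self_eq_add_self htf <| by linear_combination (norm := abel) H

theorem smul_map_one_add_op_smul_map_one (htf : ∀ m : M, m + m = 0 → m = 0)
    (hf : IsJordanGeneralizedDerivation f d) (he : IsIdempotentElem e) :
    e • f 1 + op e • f 1 = e • op e • f 1 + e • op e • f 1 := by
  have hfe := hf.map_of_isIdempotentElem htf he
  rw [hf.smul_op_smul_map_of_isIdempotentElem htf he] at hfe
  linear_combination (norm := abel) 2 • hfe - hf.map_add_self e

end IsJordanGeneralizedDerivation

end JordanGeneralizedDerivation

/-- If `f : A → M` is a Jordan generalized derivation with associated linear map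
`d` and `M` is 2-torsion free, then for every idempotent `e`,
`f 1 = e·f 1·e + (1-e)·f 1·(1-e)`. -/
theorem jordan_generalized_derivation_idempotent
    {R A M : Type*} [CommRing R] [Ring A] [Algebra R A]
    [AddCommGroup M] [Module R M] [Module A M] [Module Aᵐᵒᵖ M]
    [SMulCommClass A Aᵐᵒᵖ M]
    (htf : ∀ m : M, m + m = 0 → m = 0)
    (f d : A →ₗ[R] M)
    (h : ∀ x y : A, f (x * y + y * x) =
      op y • f x + y • f x + x • d y + op x • d y) :
    ∀ e : A, e * e = e →
      f 1 = e • (op e • f 1) + (1 - e) • (op (1 - e) • f 1) := by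
  intro e he
  have hf : IsJordanGeneralizedDerivation f.toAddMonoidHom d.toAddMonoidHom := h
  exact IsIdempotentElem.eq_smul_op_smul_add_one_sub_smul_op_smul
    (hf.smul_map_one_add_op_smul_map_one htf he)
end

section
/- Let G be the generalized matrix algebra of a Morita context (A, B, M, N, Φ, Ψ) with 2-torsion free components, and let Θ be a Jordan derivation of G written in the block form of Lemma 3.2 with component maps τ₃ : N → M and ν₂ : M → N. Then the components satisfy: τ₃(na) = aτ₃(n), τ₃(bn) = τ₃(n)b, Ψ(n⊗τ₃(n)) = 0 and Φ(τ₃(n)⊗n) = 0 for all a ∈ A, b ∈ B, n ∈ N; and ν₂(am) = ν₂(m)a, ν₂(mb) = bν₂(m), Φ(m⊗ν₂(m)) = 0 and Ψ(ν₂(m)⊗m) = 0 for all m ∈ M. -/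
open MulOpposite

/-- Multiplication of the generalized matrix algebra `[[A, M], [N, B]]` of a
Morita context, on the underlying module `A × M × N × B`. -/
def gMatMul {A B M N : Type*} [Ring A] [Ring B] [AddCommGroup M] [AddCommGroup N]
    [Module A M] [Module Bᵐᵒᵖ M] [Module B N] [Module Aᵐᵒᵖ N]
    (Φ : M → N → A) (Ψ : N → M → B)
    (x y : A × M × N × B) : A × M × N × B :=
  (x.1 * y.1 + Φ x.2.1 y.2.2.1,
   x.1 • y.2.1 + op y.2.2.2 • x.2.1,
   op y.1 • x.2.2.1 + x.2.2.2 • y.2.2.1,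
   Ψ x.2.2.1 y.2.1 + x.2.2.2 * y.2.2.2)

/-- The components `τ₃ : N → M` and `ν₂ : M → N` of a Jordan derivation of a
2-torsion free generalized matrix algebra satisfy conditions (5) and (6) of
Lemma 3.2. -/
theorem jordan_derivation_components_gmat
    {R A B M N : Type*} [CommRing R] [Ring A] [Ring B]
    [Algebra R A] [Algebra R B]
    [AddCommGroup M] [AddCommGroup N] [Module R M] [Module R N]
    [Module A M] [Module Bᵐᵒᵖ M] [Module B N] [Module Aᵐᵒᵖ N]
    [SMulCommClass A Bᵐᵒᵖ M] [SMulCommClass B Aᵐᵒᵖ N]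
    (htfA : ∀ a : A, a + a = 0 → a = 0) (htfB : ∀ b : B, b + b = 0 → b = 0)
    (htfM : ∀ m : M, m + m = 0 → m = 0) (htfN : ∀ n : N, n + n = 0 → n = 0)
    (Φ : M → N → A) (Ψ : N → M → B)
    (hΦadd₁ : ∀ (m m' : M) (n : N), Φ (m + m') n = Φ m n + Φ m' n)
    (hΦadd₂ : ∀ (m : M) (n n' : N), Φ m (n + n') = Φ m n + Φ m n')
    (hΨadd₁ : ∀ (n n' : N) (m : M), Ψ (n + n') m = Ψ n m + Ψ n' m)
    (hΨadd₂ : ∀ (n : N) (m m' : M), Ψ n (m + m') = Ψ n m + Ψ n m')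
    (hΦl : ∀ (a : A) (m : M) (n : N), Φ (a • m) n = a * Φ m n)
    (hΦr : ∀ (a : A) (m : M) (n : N), Φ m (op a • n) = Φ m n * a)
    (hΦbal : ∀ (b : B) (m : M) (n : N), Φ (op b • m) n = Φ m (b • n))
    (hΨl : ∀ (b : B) (n : N) (m : M), Ψ (b • n) m = b * Ψ n m)
    (hΨr : ∀ (b : B) (n : N) (m : M), Ψ n (op b • m) = Ψ n m * b)
    (hΨbal : ∀ (a : A) (n : N) (m : M), Ψ (op a • n) m = Ψ n (a • m))
    (hassoc₁ : ∀ (m : M) (n : N) (m' : M), Φ m n • m' = op (Ψ n m') • m)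
    (hassoc₂ : ∀ (n : N) (m : M) (n' : N), Ψ n m • n' = op (Φ m n') • n)
    (Θ : (A × M × N × B) →ₗ[R] (A × M × N × B))
    (hΘ : ∀ x y : A × M × N × B,
      Θ (gMatMul Φ Ψ x y + gMatMul Φ Ψ y x) =
        gMatMul Φ Ψ (Θ x) y + gMatMul Φ Ψ y (Θ x) +
        gMatMul Φ Ψ x (Θ y) + gMatMul Φ Ψ (Θ y) x)
    (τ₃ : N → M) (hτ₃ : ∀ n : N, τ₃ n = (Θ (0, 0, n, 0)).2.1)
    (ν₂ : M → N) (hν₂ : ∀ m : M, ν₂ m = (Θ (0, m, 0, 0)).2.2.1) :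
    (∀ (a : A) (n : N), τ₃ (op a • n) = a • τ₃ n) ∧
    (∀ (b : B) (n : N), τ₃ (b • n) = op b • τ₃ n) ∧
    (∀ n : N, Ψ n (τ₃ n) = 0) ∧
    (∀ n : N, Φ (τ₃ n) n = 0) ∧
    (∀ (a : A) (m : M), ν₂ (a • m) = op a • ν₂ m) ∧
    (∀ (b : B) (m : M), ν₂ (op b • m) = b • ν₂ m) ∧
    (∀ m : M, Φ m (ν₂ m) = 0) ∧
    (∀ m : M, Ψ (ν₂ m) m = 0) := by
  have hΦ0l : ∀ n : N, Φ 0 n = 0 := fun n => by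
    have h := hΦadd₁ 0 0 n; rw [add_zero] at h; exact (left_eq_add.mp h)
  have hΦ0r : ∀ m : M, Φ m 0 = 0 := fun m => by
    have h := hΦadd₂ m 0 0; rw [add_zero] at h; exact (left_eq_add.mp h)
  have hΨ0l : ∀ m : M, Ψ 0 m = 0 := fun m => by
    have h := hΨadd₁ 0 0 m; rw [add_zero] at h; exact (left_eq_add.mp h)
  have hΨ0r : ∀ n : N, Ψ n 0 = 0 := fun n => by
    have h := hΨadd₂ n 0 0; rw [add_zero] at h; exact (left_eq_add.mp h)
  have hzero : ((0, 0, 0, 0) : A × M × N × B) = 0 := rfl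
  refine ⟨?_, ?_, ?_, ?_, ?_, ?_, ?_, ?_⟩
  · intro a n
    have h := hΘ (a, 0, 0, 0) (0, 0, n, 0)
    simp only [gMatMul, hΦ0l, hΦ0r, hΨ0l, hΨ0r, mul_zero, zero_mul, smul_zero,
      zero_smul, op_zero, add_zero, zero_add, Prod.mk_add_mk] at h
    rw [hτ₃, hτ₃]
    exact congrArg (fun z => z.2.1) h
  · intro b n
    have h := hΘ (0, 0, 0, b) (0, 0, n, 0)
    simp only [gMatMul, hΦ0l, hΦ0r, hΨ0l, hΨ0r, mul_zero, zero_mul, smul_zero,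
      zero_smul, op_zero, add_zero, zero_add, Prod.mk_add_mk] at h
    rw [hτ₃, hτ₃]
    exact congrArg (fun z => z.2.1) h
  · intro n
    have h := hΘ (0, 0, n, 0) (0, 0, n, 0)
    simp only [gMatMul, hΦ0l, hΦ0r, hΨ0l, hΨ0r, mul_zero, zero_mul, smul_zero,
      zero_smul, op_zero, add_zero, zero_add, Prod.mk_add_mk, hzero, map_zero] at h
    rw [hτ₃]
    exact htfB _ (congrArg (fun z => z.2.2.2) h).symm
  · intro n
    have h := hΘ (0, 0, n, 0) (0, 0, n, 0)
    simp only [gMatMul, hΦ0l, hΦ0r, hΨ0l, hΨ0r, mul_zero, zero_mul, smul_zero,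
      zero_smul, op_zero, add_zero, zero_add, Prod.mk_add_mk, hzero, map_zero] at h
    rw [hτ₃]
    exact htfA _ (congrArg (fun z => z.1) h).symm
  · intro a m
    have h := hΘ (a, 0, 0, 0) (0, m, 0, 0)
    simp only [gMatMul, hΦ0l, hΦ0r, hΨ0l, hΨ0r, mul_zero, zero_mul, smul_zero,
      zero_smul, op_zero, add_zero, zero_add, Prod.mk_add_mk] at h
    rw [hν₂, hν₂]
    exact congrArg (fun z => z.2.2.1) h
  · intro b m
    have h := hΘ (0, 0, 0, b) (0, m, 0, 0)
    simp only [gMatMul, hΦ0l, hΦ0r, hΨ0l, hΨ0r, mul_zero, zero_mul, smul_zero,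
      zero_smul, op_zero, add_zero, zero_add, Prod.mk_add_mk] at h
    rw [hν₂, hν₂]
    exact congrArg (fun z => z.2.2.1) h
  · intro m
    have h := hΘ (0, m, 0, 0) (0, m, 0, 0)
    simp only [gMatMul, hΦ0l, hΦ0r, hΨ0l, hΨ0r, mul_zero, zero_mul, smul_zero,
      zero_smul, op_zero, add_zero, zero_add, Prod.mk_add_mk, hzero, map_zero] at h
    rw [hν₂]
    exact htfA _ (congrArg (fun z => z.1) h).symm
  · intro m
    have h := hΘ (0, m, 0, 0) (0, m, 0, 0)
    simp only [gMatMul, hΦ0l, hΦ0r, hΨ0l, hΨ0r, mul_zero, zero_mul, smul_zero,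
      zero_smul, op_zero, add_zero, zero_add, Prod.mk_add_mk, hzero, map_zero] at h
    rw [hν₂]
    exact htfB _ (congrArg (fun z => z.2.2.2) h).symm
end

section
/- Let G = [[A, M],[N, B]] be a generalized matrix algebra with zero pairings (Φ = 0, Ψ = 0), let Θ be a Jordan derivation of G with block components (δ₁, τ₂, τ₃, ν₂, ν₃, μ₄, m₀, n₀) satisfying the conditions of Lemma 3.2, and suppose τ₃ = 0, ν₂ = 0, and δ₁ and μ₄ are derivations. Then Θ is a derivation of G. -/
open MulOpposite

/-- Multiplication of the generalized matrix algebra `[[A, M], [N, B]]` with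
both pairings zero, on the underlying module `A × M × N × B`. -/
def gMatMul₀ {A B M N : Type*} [Ring A] [Ring B] [AddCommGroup M] [AddCommGroup N]
    [Module A M] [Module Bᵐᵒᵖ M] [Module B N] [Module Aᵐᵒᵖ N]
    (x y : A × M × N × B) : A × M × N × B :=
  (x.1 * y.1,
   x.1 • y.2.1 + op y.2.2.2 • x.2.1,
   op y.1 • x.2.2.1 + x.2.2.2 • y.2.2.1,
   x.2.2.2 * y.2.2.2)

/-!
Θ splits as `D + ad z` with `z = [[0, -m₀], [n₀, 0]]` and `D` the diagonal map
`[[a, m], [n, b]] ↦ [[δ₁ a, τ₂ m], [ν₃ n, μ₄ b]]`. The multiplication with zero pairings is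
associative and biadditive, so `ad z` is a derivation, and the module identities for `τ₂`
and `ν₃` are exactly the Leibniz rule for `D` on the off-diagonal corners.
-/

namespace GMat₀

variable {A B M N : Type*} [Ring A] [Ring B] [AddCommGroup M] [AddCommGroup N]
  [Module A M] [Module Bᵐᵒᵖ M] [Module B N] [Module Aᵐᵒᵖ N]

def IsDerivation (D : A × M × N × B → A × M × N × B) : Prop :=
  ∀ x y, D (gMatMul₀ x y) = gMatMul₀ (D x) y + gMatMul₀ x (D y)

def ad (z x : A × M × N × B) : A × M × N × B :=
  gMatMul₀ z x - gMatMul₀ x z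

def diag (δ₁ : A →+ A) (τ₂ : M →+ M) (ν₃ : N →+ N) (μ₄ : B →+ B)
    (x : A × M × N × B) : A × M × N × B :=
  (δ₁ x.1, τ₂ x.2.1, ν₃ x.2.2.1, μ₄ x.2.2.2)

theorem mul_add (x y y' : A × M × N × B) :
    gMatMul₀ x (y + y') = gMatMul₀ x y + gMatMul₀ x y' := by
  simp only [gMatMul₀, Prod.fst_add, Prod.snd_add, op_add, _root_.mul_add, smul_add,
    add_smul, Prod.mk_add_mk, Prod.mk.injEq]
  refine ⟨trivial, ?_, ?_, trivial⟩ <;> abel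

theorem add_mul (x x' y : A × M × N × B) :
    gMatMul₀ (x + x') y = gMatMul₀ x y + gMatMul₀ x' y := by
  simp only [gMatMul₀, Prod.fst_add, Prod.snd_add, _root_.add_mul, smul_add, add_smul,
    Prod.mk_add_mk, Prod.mk.injEq]
  refine ⟨trivial, ?_, ?_, trivial⟩ <;> abel

theorem mul_sub (x y y' : A × M × N × B) :
    gMatMul₀ x (y - y') = gMatMul₀ x y - gMatMul₀ x y' :=
  eq_sub_of_add_eq (by rw [← mul_add, sub_add_cancel])

theorem sub_mul (x x' y : A × M × N × B) :
    gMatMul₀ (x - x') y = gMatMul₀ x y - gMatMul₀ x' y :=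
  eq_sub_of_add_eq (by rw [← add_mul, sub_add_cancel])

theorem mul_assoc [SMulCommClass A Bᵐᵒᵖ M] [SMulCommClass B Aᵐᵒᵖ N]
    (x y z : A × M × N × B) :
    gMatMul₀ (gMatMul₀ x y) z = gMatMul₀ x (gMatMul₀ y z) := by
  simp only [gMatMul₀, _root_.mul_assoc, op_mul, mul_smul, smul_add, Prod.mk.injEq]
  refine ⟨trivial, ?_, ?_, trivial⟩
  · rw [smul_comm x.1 (op z.2.2.2)]
    abel
  · rw [smul_comm x.2.2.2 (op z.1)]
    abel

theorem IsDerivation.add {D D' : A × M × N × B → A × M × N × B}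
    (hD : IsDerivation D) (hD' : IsDerivation D') : IsDerivation (D + D') := by
  intro x y
  simp only [Pi.add_apply, hD x y, hD' x y, add_mul, mul_add]
  abel

theorem isDerivation_ad [SMulCommClass A Bᵐᵒᵖ M] [SMulCommClass B Aᵐᵒᵖ N]
    (z : A × M × N × B) : IsDerivation (ad z) := by
  intro x y
  simp only [ad, sub_mul, mul_sub, mul_assoc]
  abel

theorem isDerivation_diag (δ₁ : A →+ A) (τ₂ : M →+ M) (ν₃ : N →+ N) (μ₄ : B →+ B)
    (hδ : ∀ a a' : A, δ₁ (a * a') = δ₁ a * a' + a * δ₁ a')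
    (hμ : ∀ b b' : B, μ₄ (b * b') = μ₄ b * b' + b * μ₄ b')
    (hτa : ∀ (a : A) (m : M), τ₂ (a • m) = a • τ₂ m + δ₁ a • m)
    (hτb : ∀ (b : B) (m : M), τ₂ (op b • m) = op b • τ₂ m + op (μ₄ b) • m)
    (hνa : ∀ (a : A) (n : N), ν₃ (op a • n) = op a • ν₃ n + op (δ₁ a) • n)
    (hνb : ∀ (b : B) (n : N), ν₃ (b • n) = b • ν₃ n + μ₄ b • n) :
    IsDerivation (diag δ₁ τ₂ ν₃ μ₄) := by
  rintro ⟨a, m, n, b⟩ ⟨a', m', n', b'⟩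
  simp only [diag, gMatMul₀, map_add, hδ, hμ, hτa, hτb, hνa, hνb, Prod.mk_add_mk,
    Prod.mk.injEq]
  refine ⟨trivial, ?_, ?_, trivial⟩ <;> abel

end GMat₀

open GMat₀ in
/-- A Jordan derivation of a generalized matrix algebra with zero pairings in
the block form of Lemma 3.2 whose components satisfy `τ₃ = 0`, `ν₂ = 0` with
`δ₁` and `μ₄` derivations is a derivation. -/
theorem jordan_derivation_block_form_is_derivation
    {R A B M N : Type*} [CommRing R] [Ring A] [Ring B]
    [Algebra R A] [Algebra R B]
    [AddCommGroup M] [AddCommGroup N] [Module R M] [Module R N]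
    [Module A M] [Module Bᵐᵒᵖ M] [Module B N] [Module Aᵐᵒᵖ N]
    [SMulCommClass A Bᵐᵒᵖ M] [SMulCommClass B Aᵐᵒᵖ N]
    (m₀ : M) (n₀ : N)
    (δ₁ : A →ₗ[R] A) (τ₂ : M →ₗ[R] M) (ν₃ : N →ₗ[R] N) (μ₄ : B →ₗ[R] B)
    (hδ : ∀ a a' : A, δ₁ (a * a') = δ₁ a * a' + a * δ₁ a')
    (hμ : ∀ b b' : B, μ₄ (b * b') = μ₄ b * b' + b * μ₄ b')
    (hτa : ∀ (a : A) (m : M), τ₂ (a • m) = a • τ₂ m + δ₁ a • m)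
    (hτb : ∀ (b : B) (m : M), τ₂ (op b • m) = op b • τ₂ m + op (μ₄ b) • m)
    (hνa : ∀ (a : A) (n : N), ν₃ (op a • n) = op a • ν₃ n + op (δ₁ a) • n)
    (hνb : ∀ (b : B) (n : N), ν₃ (b • n) = b • ν₃ n + μ₄ b • n)
    (Θ : (A × M × N × B) →ₗ[R] (A × M × N × B))
    (hΘ : ∀ (a : A) (m : M) (n : N) (b : B),
      Θ (a, m, n, b) =
        (δ₁ a,
         a • m₀ - op b • m₀ + τ₂ m,
         op a • n₀ - b • n₀ + ν₃ n,
         μ₄ b)) :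
    ∀ x y : A × M × N × B,
      Θ (gMatMul₀ x y) = gMatMul₀ (Θ x) y + gMatMul₀ x (Θ y) := by
  have hsplit : ⇑Θ = diag δ₁.toAddMonoidHom τ₂.toAddMonoidHom ν₃.toAddMonoidHom
      μ₄.toAddMonoidHom + ad (0, -m₀, n₀, 0) := by
    funext ⟨a, m, n, b⟩
    simp only [hΘ, Pi.add_apply, diag, ad, gMatMul₀, LinearMap.toAddMonoidHom_coe,
      zero_mul, mul_zero, zero_smul, op_zero, smul_neg, Prod.mk_sub_mk,
      Prod.mk_add_mk, Prod.mk.injEq]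
    refine ⟨?_, ?_, ?_, ?_⟩ <;> abel
  rw [hsplit]
  exact (isDerivation_diag _ _ _ _ hδ hμ hτa hτb hνa hνb).add (isDerivation_ad _)
end

section
/- Consider the 7-dimensional K-algebra E of the previous context. The linear map Θ₂ defined by Θ₂(e₁) = Θ₂(e₂) = Θ₂(e₃) = 0, Θ₂(α) = α*, Θ₂(α*) = α, Θ₂(β) = β*, Θ₂(β*) = β is an anti-derivation of E, and the linear map Θ₁ defined by Θ₁(e₁) = Θ₁(e₂) = Θ₁(e₃) = 0, Θ₁(α) = Θ₁(α*) = 0, Θ₁(β) = β, Θ₁(β*) = −β* is a derivation of E. -/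
/-! Both identities are bilinear in `x, y`, so it suffices to check them on the basis.
`Θ₁` agrees on the basis with the inner derivation `x ↦ x e₃ - e₃ x`. For `Θ₂`, write each arrow
as `a = e_{t(a)} a e_{s(a)}`: then `e_i a` is `a` or `0` according as `i = t(a)` or not, and
`a e_i` likewise with `s(a)`; since `Θ₂` sends each arrow to its reverse, which swaps source and
target, the anti-Leibniz rule holds on vertex–arrow products, while products of two arrows vanish
on both sides because `Θ₂` maps arrows to arrows. -/

open Set Submodule

theorem LinearMap.ext_on₂ {R M N P : Type*} [CommSemiring R] [AddCommMonoid M] [AddCommMonoid N]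
    [AddCommMonoid P] [Module R M] [Module R N] [Module R P] {s : Set M} {t : Set N}
    (hs : span R s = ⊤) (ht : span R t = ⊤) {B C : M →ₗ[R] N →ₗ[R] P}
    (h : ∀ x ∈ s, ∀ y ∈ t, B x y = C x y) : B = C :=
  LinearMap.ext_on hs fun x hx => LinearMap.ext_on ht fun y hy => h x hx y hy

theorem LinearMap.map_mul_of_antiDerivation_on_span {K E : Type*} [CommSemiring K] [Semiring E]
    [Algebra K E] (Θ : E →ₗ[K] E) {S : Set E}
    (hS : span K S = ⊤) (h : ∀ x ∈ S, ∀ y ∈ S, Θ (x * y) = Θ y * x + y * Θ x) (x y : E) :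
    Θ (x * y) = Θ y * x + y * Θ x := by
  have key : (LinearMap.mul K E).compr₂ Θ =
      (LinearMap.mul K E).flip.compl₂ Θ + (LinearMap.mul K E).flip ∘ₗ Θ :=
    LinearMap.ext_on₂ hS hS h
  exact LinearMap.congr_fun₂ key x y

theorem LinearMap.map_mul_of_eqOn_commutator {K E : Type*} [CommRing K] [Ring E]
    [Algebra K E] (Θ : E →ₗ[K] E) {S : Set E} (hS : span K S = ⊤) {c : E}
    (h : ∀ x ∈ S, Θ x = x * c - c * x) (x y : E) : Θ (x * y) = Θ x * y + x * Θ y := by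
  have hΘ : Θ = LinearMap.mulRight K c - LinearMap.mulLeft K c := LinearMap.ext_on hS h
  simp only [hΘ, LinearMap.sub_apply, LinearMap.mulRight_apply, LinearMap.mulLeft_apply]
  noncomm_ring

section Quiver

variable {E V A : Type*} [Ring E] [DecidableEq V] {e : V → E} {arr : A → E} {src tgt : A → V}

theorem vertex_mul_arrow (he : ∀ i j, e i * e j = if i = j then e i else 0)
    (harr : ∀ a, e (tgt a) * arr a * e (src a) = arr a) (i : V) (a : A) :
    e i * arr a = if i = tgt a then arr a else 0 := by
  nth_rw 1 [← harr a]
  by_cases h : i = tgt a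
  · rw [← mul_assoc, ← mul_assoc, he, if_pos h, h, harr, if_pos rfl]
  · rw [← mul_assoc, ← mul_assoc, he, if_neg h, if_neg h, zero_mul, zero_mul]

theorem arrow_mul_vertex (he : ∀ i j, e i * e j = if i = j then e i else 0)
    (harr : ∀ a, e (tgt a) * arr a * e (src a) = arr a) (a : A) (i : V) :
    arr a * e i = if i = src a then arr a else 0 := by
  nth_rw 1 [← harr a]
  by_cases h : i = src a
  · rw [mul_assoc, he, if_pos h.symm, harr, if_pos h]
  · rw [mul_assoc, he, if_neg (Ne.symm h), if_neg h, mul_zero]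

theorem eqOn_commutator_on_vertices_and_arrows (he : ∀ i j, e i * e j = if i = j then e i else 0)
    (harr : ∀ a, e (tgt a) * arr a * e (src a) = arr a) (k : V) {Θ : E → E}
    (hΘe : ∀ i, Θ (e i) = 0)
    (hΘarr : ∀ a, Θ (arr a) = (if k = src a then arr a else 0) - (if k = tgt a then arr a else 0)) :
    ∀ x ∈ range e ∪ range arr, Θ x = x * e k - e k * x := by
  rintro _ (⟨i, rfl⟩ | ⟨a, rfl⟩)
  · rw [hΘe, he, he]
    by_cases h : i = k
    · simp [h]
    · simp [h, Ne.symm h]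
  · rw [hΘarr, arrow_mul_vertex he harr, vertex_mul_arrow he harr]

variable {K : Type*} [CommSemiring K] [Algebra K E]

theorem antiDerivation_on_vertices_and_arrows (he : ∀ i j, e i * e j = if i = j then e i else 0)
    (harr : ∀ a, e (tgt a) * arr a * e (src a) = arr a) (hrad : ∀ a b, arr a * arr b = 0)
    {opp : A → A} (hsrc : ∀ a, src (opp a) = tgt a) (htgt : ∀ a, tgt (opp a) = src a)
    {Θ : E →ₗ[K] E} (hΘe : ∀ i, Θ (e i) = 0) (hΘarr : ∀ a, Θ (arr a) = arr (opp a)) :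
    ∀ x ∈ range e ∪ range arr, ∀ y ∈ range e ∪ range arr, Θ (x * y) = Θ y * x + y * Θ x := by
  rintro _ (⟨i, rfl⟩ | ⟨a, rfl⟩) _ (⟨j, rfl⟩ | ⟨b, rfl⟩)
  · rw [he]; split_ifs <;> simp [hΘe]
  · rw [vertex_mul_arrow he harr, hΘarr, arrow_mul_vertex he harr, hsrc, hΘe]
    split_ifs <;> simp [hΘarr]
  · rw [arrow_mul_vertex he harr, hΘarr, vertex_mul_arrow he harr, htgt, hΘe]
    split_ifs <;> simp [hΘarr]
  · rw [hrad, hΘarr, hΘarr, hrad, hrad, map_zero, add_zero]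

end Quiver

theorem derivation_and_anti_derivation_example_general
    {K E : Type*} [Field K] [Ring E] [Algebra K E]
    (e₁ e₂ e₃ α β αs βs : E)
    (h11 : e₁ * e₁ = e₁) (h22 : e₂ * e₂ = e₂) (h33 : e₃ * e₃ = e₃)
    (h12 : e₁ * e₂ = 0) (h21 : e₂ * e₁ = 0) (h13 : e₁ * e₃ = 0)
    (h31 : e₃ * e₁ = 0) (h23 : e₂ * e₃ = 0) (h32 : e₃ * e₂ = 0)
    (hα : e₂ * α * e₁ = α) (hβ : e₂ * β * e₃ = β)
    (hαs : e₁ * αs * e₂ = αs) (hβs : e₃ * βs * e₂ = βs)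
    (harrows : ∀ x ∈ ({α, β, αs, βs} : Set E),
      ∀ y ∈ ({α, β, αs, βs} : Set E), x * y = 0)
    (hspan : Submodule.span K ({e₁, e₂, e₃, α, β, αs, βs} : Set E) = ⊤)
    (Θ₁ Θ₂ : E →ₗ[K] E)
    (hΘ₁1 : Θ₁ e₁ = 0) (hΘ₁2 : Θ₁ e₂ = 0) (hΘ₁3 : Θ₁ e₃ = 0)
    (hΘ₁α : Θ₁ α = 0) (hΘ₁αs : Θ₁ αs = 0)
    (hΘ₁β : Θ₁ β = β) (hΘ₁βs : Θ₁ βs = -βs)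
    (hΘ₂1 : Θ₂ e₁ = 0) (hΘ₂2 : Θ₂ e₂ = 0) (hΘ₂3 : Θ₂ e₃ = 0)
    (hΘ₂α : Θ₂ α = αs) (hΘ₂αs : Θ₂ αs = α)
    (hΘ₂β : Θ₂ β = βs) (hΘ₂βs : Θ₂ βs = β) :
    (∀ x y : E, Θ₂ (x * y) = Θ₂ y * x + y * Θ₂ x) ∧
    (∀ x y : E, Θ₁ (x * y) = Θ₁ x * y + x * Θ₁ y) := by
  let e : Fin 3 → E := ![e₁, e₂, e₃]
  let arr : Fin 4 → E := ![α, β, αs, βs]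
  let src : Fin 4 → Fin 3 := ![0, 2, 1, 1]
  let tgt : Fin 4 → Fin 3 := ![1, 1, 0, 2]
  let opp : Fin 4 → Fin 4 := ![2, 3, 0, 1]
  have he : ∀ i j, e i * e j = if i = j then e i else 0 := by
    intro i j
    fin_cases i <;> fin_cases j <;> simp [e, h11, h22, h33, h12, h21, h13, h31, h23, h32]
  have harr : ∀ a, e (tgt a) * arr a * e (src a) = arr a := by
    intro a
    fin_cases a <;> assumption
  have hrad : ∀ a b, arr a * arr b = 0 := fun a b =>
    harrows _ (by fin_cases a <;> simp [arr]) _ (by fin_cases b <;> simp [arr])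
  have hgen : span K (range e ∪ range arr) = ⊤ := by
    rw [← hspan]
    congr 1
    simp only [e, arr, Matrix.range_cons, Matrix.range_empty, union_empty, ← insert_eq,
      insert_union]
  refine ⟨LinearMap.map_mul_of_antiDerivation_on_span Θ₂ hgen ?_,
    LinearMap.map_mul_of_eqOn_commutator Θ₁ hgen (c := e₃) ?_⟩
  · refine antiDerivation_on_vertices_and_arrows he harr hrad (opp := opp) (by decide) (by decide)
      ?_ ?_
    · intro i; fin_cases i <;> assumption
    · intro a; fin_cases a <;> assumption
  · refine eqOn_commutator_on_vertices_and_arrows he harr 2 ?_ ?_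
    · intro i; fin_cases i <;> assumption
    · intro a; fin_cases a <;> simp [arr, src, tgt, hΘ₁α, hΘ₁β, hΘ₁αs, hΘ₁βs]

/-- On the 7-dimensional algebra `E` with basis `{e₁,e₂,e₃,α,β,α*,β*}`, the map
`Θ₂` with `Θ₂(eᵢ)=0`, `Θ₂(α)=α*`, `Θ₂(α*)=α`, `Θ₂(β)=β*`, `Θ₂(β*)=β` is an
anti-derivation, and the map `Θ₁` with `Θ₁(eᵢ)=0`, `Θ₁(α)=Θ₁(α*)=0`,
`Θ₁(β)=β`, `Θ₁(β*)=-β*` is a derivation. -/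
theorem derivation_and_anti_derivation_example
    {K E : Type*} [Field K] [Ring E] [Algebra K E]
    (hchar : (2 : K) ≠ 0)
    (e₁ e₂ e₃ α β αs βs : E)
    (hsum : e₁ + e₂ + e₃ = 1)
    (h11 : e₁ * e₁ = e₁) (h22 : e₂ * e₂ = e₂) (h33 : e₃ * e₃ = e₃)
    (h12 : e₁ * e₂ = 0) (h21 : e₂ * e₁ = 0) (h13 : e₁ * e₃ = 0)
    (h31 : e₃ * e₁ = 0) (h23 : e₂ * e₃ = 0) (h32 : e₃ * e₂ = 0)
    (hα : e₂ * α * e₁ = α) (hβ : e₂ * β * e₃ = β)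
    (hαs : e₁ * αs * e₂ = αs) (hβs : e₃ * βs * e₂ = βs)
    (harrows : ∀ x ∈ ({α, β, αs, βs} : Set E),
      ∀ y ∈ ({α, β, αs, βs} : Set E), x * y = 0)
    (hli : LinearIndependent K ![e₁, e₂, e₃, α, β, αs, βs])
    (hspan : Submodule.span K ({e₁, e₂, e₃, α, β, αs, βs} : Set E) = ⊤)
    (Θ₁ Θ₂ : E →ₗ[K] E)
    (hΘ₁1 : Θ₁ e₁ = 0) (hΘ₁2 : Θ₁ e₂ = 0) (hΘ₁3 : Θ₁ e₃ = 0)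
    (hΘ₁α : Θ₁ α = 0) (hΘ₁αs : Θ₁ αs = 0)
    (hΘ₁β : Θ₁ β = β) (hΘ₁βs : Θ₁ βs = -βs)
    (hΘ₂1 : Θ₂ e₁ = 0) (hΘ₂2 : Θ₂ e₂ = 0) (hΘ₂3 : Θ₂ e₃ = 0)
    (hΘ₂α : Θ₂ α = αs) (hΘ₂αs : Θ₂ αs = α)
    (hΘ₂β : Θ₂ β = βs) (hΘ₂βs : Θ₂ βs = β) :
    (∀ x y : E, Θ₂ (x * y) = Θ₂ y * x + y * Θ₂ x) ∧
    (∀ x y : E, Θ₁ (x * y) = Θ₁ x * y + x * Θ₁ y) :=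
  derivation_and_anti_derivation_example_general e₁ e₂ e₃ α β αs βs h11 h22 h33 h12 h21 h13 h31 h23
    h32 hα hβ hαs hβs harrows hspan Θ₁ Θ₂ hΘ₁1 hΘ₁2 hΘ₁3 hΘ₁α hΘ₁αs hΘ₁β hΘ₁βs hΘ₂1 hΘ₂2 hΘ₂3 hΘ₂α
    hΘ₂αs hΘ₂β hΘ₂βs
end

section
/- Let f : A → A be a Jordan generalized derivation on a unital algebra A with associated map d, where A is 2-torsion free, and suppose f(1) lies in the center Z(A) of A and every Jordan derivation of A is a derivation. Then f is a generalized derivation, i.e., f(xy) = f(x)y + x d′(y) for some derivation d′ of A. -/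
/-!
Putting `x = 1` in the Jordan identity and using that `f 1` is central gives `2 f y = 2 (f 1 y + d y)`,
so `f = L_{f 1} + d` by 2-torsion freeness. Since left multiplication by a central element satisfies
the Jordan identity `L(xy + yx) = L(x) y + y L(x)`, the Jordan identity for `f` then says exactly that
`d` is a Jordan derivation, hence a derivation, and `f(xy) = f(1) xy + d(x) y + x d(y) = f(x) y + x d(y)`.
-/

section

variable {A : Type*} [Ring A]

theorem apply_eq_mul_add_of_jordan_generalized {F : Type*} [FunLike F A A] [AddHomClass F A A]
    (htf : ∀ a : A, a + a = 0 → a = 0) (f : F) (d : A → A)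
    (h : ∀ x y : A, f (x * y + y * x) = f x * y + y * f x + x * d y + d y * x)
    (hcen : ∀ a : A, f 1 * a = a * f 1) (y : A) :
    f y = f 1 * y + d y := by
  have hdouble : f y + f y = (f 1 * y + d y) + (f 1 * y + d y) := by
    have h1 := h 1 y
    simp only [one_mul, mul_one, map_add, ← hcen y] at h1
    rw [h1]
    abel
  refine sub_eq_zero.mp (htf _ ?_)
  rw [sub_add_sub_comm, hdouble, sub_self]

theorem jordan_derivation_of_eq_mul_add {f d : A → A}
    (hf : ∀ y : A, f y = f 1 * y + d y) (hcen : ∀ a : A, f 1 * a = a * f 1)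
    (h : ∀ x y : A, f (x * y + y * x) = f x * y + y * f x + x * d y + d y * x) (x y : A) :
    d (x * y + y * x) = d x * y + y * d x + x * d y + d y * x := by
  have hcomm : y * (f 1 * x) = f 1 * (y * x) := by
    rw [← mul_assoc, ← hcen y, mul_assoc]
  have hxy := h x y
  rw [hf, hf x] at hxy
  refine add_left_cancel (a := f 1 * (x * y + y * x)) (hxy.trans ?_)
  simp only [add_mul, mul_add, hcomm, mul_assoc]
  abel

theorem generalized_derivation_of_eq_mul_add {f d : A → A}
    (hf : ∀ y : A, f y = f 1 * y + d y) (hd : ∀ x y : A, d (x * y) = d x * y + x * d y)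
    (x y : A) :
    f (x * y) = f x * y + x * d y := by
  rw [hf (x * y), hf x, hd, add_mul, mul_assoc]
  abel

end

/-- If `f : A → A` is a Jordan generalized derivation with associated map `d`,
`A` is 2-torsion free, `f 1` is central and every Jordan derivation of `A` is a
derivation, then `f` is a generalized derivation. -/
theorem jordan_generalized_derivation_is_generalized_derivation
    {R A : Type*} [CommRing R] [Ring A] [Algebra R A]
    (htf : ∀ a : A, a + a = 0 → a = 0)
    (f d : A →ₗ[R] A)
    (h : ∀ x y : A, f (x * y + y * x) = f x * y + y * f x + x * d y + d y * x)
    (hcen : ∀ a : A, f 1 * a = a * f 1)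
    (hjd : ∀ g : A →ₗ[R] A,
      (∀ x y : A, g (x * y + y * x) = g x * y + y * g x + x * g y + g y * x) →
      (∀ x y : A, g (x * y) = g x * y + x * g y)) :
    ∃ d' : A →ₗ[R] A,
      (∀ x y : A, d' (x * y) = d' x * y + x * d' y) ∧
      (∀ x y : A, f (x * y) = f x * y + x * d' y) := by
  have hf := apply_eq_mul_add_of_jordan_generalized htf f d h hcen
  have hd := hjd d (jordan_derivation_of_eq_mul_add hf hcen h)
  exact ⟨d, hd, generalized_derivation_of_eq_mul_add hf hd⟩
end
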